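/- The differential d^p of the Lie-Rinehart complex sends A-multilinear alternating maps to A-multilinear alternating maps: if ψ: Λ^p g → W is A-linear, then d^p ψ: Λ^{p+1} g → W is also A-linear. -/

import Mathlib

open scoped TensorProduct BigOperators

structure LieRinehart (k A g : Type*) [CommRing k] [CommRing A] [Algebra k A]
    [LieRing g] [LieAlgebra k g] [Module A g] [IsScalarTower k A g] where
  anchor : g → Module.End k A
  anchor_add : ∀ x y : g, anchor (x + y) = anchor x + anchor y
  anchor_smul : ∀ (a : A) (x : g) (b : A), anchor (a • x) b = a * anchor x b
  anchor_leibniz : ∀ (x : g) (a b : A), anchor x (a * b) = a * anchor x b + anchor x a * b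
  anchor_bracket : ∀ x y : g, anchor ⁅x, y⁆ = ⁅anchor x, anchor y⁆
  bracket_smul : ∀ (a : A) (x y : g), ⁅x, a • y⁆ = a • ⁅x, y⁆ + anchor x a • y

variable {k A g : Type*} [CommRing k] [CommRing A] [Algebra k A]
  [LieRing g] [LieAlgebra k g] [Module A g] [IsScalarTower k A g]

structure LRConnection (L : LieRinehart k A g) (W : Type*) [AddCommGroup W]
    [Module k W] [Module A W] [IsScalarTower k A W] where
  conn : g → Module.End k W
  conn_add : ∀ x y : g, conn (x + y) = conn x + conn y
  conn_smul : ∀ (a : A) (x : g) (w : W), conn (a • x) w = a • conn x w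
  leibniz : ∀ (x : g) (a : A) (w : W), conn x (a • w) = a • conn x w + L.anchor x a • w

variable {L : LieRinehart k A g}
variable {W W' : Type*} [AddCommGroup W] [Module k W] [Module A W] [IsScalarTower k A W]
  [AddCommGroup W'] [Module k W'] [Module A W'] [IsScalarTower k A W']

/-- The curvature of a connection, as a `k`-linear endomorphism. -/
def curvK (D : LRConnection L W) (x y : g) : Module.End k W :=
  ⁅D.conn x, D.conn y⁆ - D.conn ⁅x, y⁆

/-- Remove the entries at positions `i < j` from a tuple. -/
def remove2 {n : ℕ} (v : Fin (n + 2) → g) (i j : Fin (n + 2)) (h : i < j) : Fin n → g :=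
  fun m =>
    v (i.succAbove ((j.pred (by rintro rfl; exact absurd h (by simp))).succAbove m))

/-- The Lie–Rinehart (Chevalley–Eilenberg style) differential on cochains with values in a
module with connection. -/
noncomputable def lrD (D : LRConnection L W) {p : ℕ}
    (ψ : (Fin (p + 1) → g) → W) : (Fin (p + 2) → g) → W := fun v =>
  (∑ i : Fin (p + 2), ((-1 : ℤ) ^ (i : ℕ)) • D.conn (v i) (ψ fun m => v (i.succAbove m)))
    + ∑ i : Fin (p + 2), ∑ j : Fin (p + 2),
        if h : i < j then
          ((-1 : ℤ) ^ ((i : ℕ) + (j : ℕ))) • ψ (Fin.cons ⁅v i, v j⁆ (remove2 v i j h))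
        else 0

/-- The canonical connection on `A` itself, given by the anchor map. -/
def anchorConnection (L : LieRinehart k A g) : LRConnection L A where
  conn := L.anchor
  conn_add := L.anchor_add
  conn_smul := fun a x w => by rw [L.anchor_smul, smul_eq_mul]
  leibniz := fun x a w => by
    simp only [smul_eq_mul]; rw [L.anchor_leibniz]

/-- The induced action `ad∇` of a connection on `End_A(W)`. -/
noncomputable def adAct (D : LRConnection L W) (x : g) (φ : W →ₗ[A] W) : W →ₗ[A] W where
  toFun w := D.conn x (φ w) - φ (D.conn x w)
  map_add' u v := by simp only [map_add]; abel
  map_smul' a w := by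
    simp only [map_smul, RingHom.id_apply, D.leibniz, map_add, smul_sub]
    abel

/-- The Lie–Rinehart differential on `End_A(W)`-valued cochains, using `ad∇`. -/
noncomputable def lrDEnd (D : LRConnection L W) {p : ℕ}
    (ψ : (Fin (p + 1) → g) → (W →ₗ[A] W)) : (Fin (p + 2) → g) → (W →ₗ[A] W) := fun v =>
  (∑ i : Fin (p + 2), ((-1 : ℤ) ^ (i : ℕ)) • adAct D (v i) (ψ fun m => v (i.succAbove m)))
    + ∑ i : Fin (p + 2), ∑ j : Fin (p + 2),
        if h : i < j then
          ((-1 : ℤ) ^ ((i : ℕ) + (j : ℕ))) • ψ (Fin.cons ⁅v i, v j⁆ (remove2 v i j h))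
        else 0

/-- `σ` is a `(p,q)`-shuffle: strictly increasing on the first `p` and the last `q` positions. -/
def IsShuffle (p q : ℕ) (σ : Equiv.Perm (Fin (p + q))) : Prop :=
  (∀ i j : Fin (p + q), i < j → (j : ℕ) < p → σ i < σ j) ∧
    (∀ i j : Fin (p + q), i < j → p ≤ (i : ℕ) → σ i < σ j)

open Classical in
/-- The exterior (shuffle) product of cochains, combined with a product `f` on values. -/
noncomputable def wedge {α β γ : Type*} [AddCommGroup γ] {p q : ℕ}
    (x : (Fin p → g) → α) (y : (Fin q → g) → β) (f : α → β → γ) :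
    (Fin (p + q) → g) → γ := fun v =>
  ∑ σ : Equiv.Perm (Fin (p + q)),
    if IsShuffle p q σ then
      ((Equiv.Perm.sign σ : ℤ)) •
        f (x fun i => v (σ (Fin.castAdd q i))) (y fun i => v (σ (Fin.natAdd p i)))
    else 0

/-- Wedge powers of an `End_A(W)`-valued `2`-cochain (e.g. the curvature); `powC R n = R^n`. -/
noncomputable def powC (R : (Fin 2 → g) → (W →ₗ[A] W)) :
    (n : ℕ) → (Fin (2 * n) → g) → (W →ₗ[A] W)
  | 0 => fun _ => LinearMap.id
  | n + 1 => wedge (powC R n) R fun f1 f2 => f1 ∘ₗ f2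

/-- Reindexing a tuple along an equality of lengths. -/
def recast {n m : ℕ} (h : n = m) (v : Fin m → g) : Fin n → g := fun i => v (Fin.cast h i)

/-! Scale the `i₀`-th argument of `lrD D ψ` by `a : A`. Multilinearity of `ψ` pulls `a` out of
every term, up to two corrections. The Leibniz rule of `∇` adds to the `j`-th connection term
(`j ≠ i₀`) the defect `(-1)^j • α(v j)(a) • ψ(v without j)`. The anchor term in
`⁅a • x, y⁆ = a • ⁅x, y⁆ - α(y)(a) • x` takes away from the bracket term of the pair `{i₀, j}`
a multiple of `ψ(v i₀ or v j, rest)`; moving that argument back to its place gives exactly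
the same defect. -/

theorem neg_one_pow_add_mul_neg_one_pow {R : Type*} [Monoid R] [HasDistribNeg R] (m n : ℕ) :
    (-1 : R) ^ (m + n) * (-1) ^ n = (-1) ^ m := by
  rw [pow_add, mul_assoc, ← pow_add, ← two_mul, pow_mul, neg_one_sq, one_pow, mul_one]

theorem Finset.sum_sum_lt_pairs_through {ι M : Type*} [Fintype ι] [LinearOrder ι]
    [AddCommMonoid M] (i₀ : ι) (e : ι → M) :
    (∑ i, ∑ j, if i < j then (if i = i₀ then e j else if j = i₀ then e i else 0) else 0) =
      ∑ j, if j = i₀ then 0 else e j := by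
  have split (i j : ι) :
      (if i < j then (if i = i₀ then e j else if j = i₀ then e i else 0) else 0) =
        (if i = i₀ then (if i₀ < j then e j else 0) else 0) +
          (if j = i₀ then (if i < i₀ then e i else 0) else 0) := by
    by_cases hi : i = i₀ <;> by_cases hj : j = i₀ <;> subst_vars <;> simp [*]
  simp only [split, Finset.sum_add_distrib, Finset.sum_ite_irrel, Finset.sum_const_zero,
    Finset.sum_ite_eq', Finset.mem_univ, if_true]
  rw [← Finset.sum_add_distrib]
  refine Finset.sum_congr rfl fun j _ => ?_
  rcases lt_trichotomy j i₀ with h | rfl | h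
  · simp [h, h.ne, h.not_gt]
  · simp
  · simp [h, h.ne', h.not_gt]

namespace AlternatingMap

variable {R M N : Type*} [CommRing R] [AddCommGroup M] [Module R M] [AddCommGroup N]
  [Module R N]

theorem map_update_smul_self {ι : Type*} [DecidableEq ι] (f : M [⋀^ι]→ₗ[R] N) (w : ι → M)
    (i : ι) (a : R) : f (Function.update w i (a • w i)) = a • f w := by
  rw [f.map_update_smul, Function.update_eq_self]

variable {n : ℕ}

theorem map_cons_removeNth (f : M [⋀^Fin (n + 1)]→ₗ[R] N) (w : Fin (n + 1) → M)
    (t : Fin (n + 1)) : f (Fin.cons (w t) (t.removeNth w)) = (-1 : ℤ) ^ (t : ℕ) • f w := by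
  have := f.neg_one_pow_smul_map_insertNth t (w t) (t.removeNth w)
  rw [Fin.insertNth_self_removeNth] at this
  exact this.symm

theorem map_cons_smul_add_smul (f : M [⋀^Fin (n + 1)]→ₗ[R] N) (w : Fin n → M)
    (x y : M) (a b : R) :
    f (Fin.cons (a • x + b • y) w) = a • f (Fin.cons x w) + b • f (Fin.cons y w) := by
  rw [← Fin.update_cons_zero (α := fun _ => M) 0 w, f.map_update_add, f.map_update_smul,
    f.map_update_smul, Fin.update_cons_zero, Fin.update_cons_zero]

theorem map_removeNth_update_smul_self_of_ne (f : M [⋀^Fin n]→ₗ[R] N)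
    (w : Fin (n + 1) → M) {i t : Fin (n + 1)} (h : i ≠ t) (a : R) :
    f (t.removeNth (Function.update w i (a • w i))) = a • f (t.removeNth w) := by
  obtain ⟨m, rfl⟩ := Fin.exists_succAbove_eq h
  rw [Fin.removeNth_update_succAbove]
  exact f.map_update_smul_self _ m a

theorem map_cons_removeNth_update_smul_self_of_ne (f : M [⋀^Fin (n + 1)]→ₗ[R] N) (y : M)
    (w : Fin (n + 1) → M) {m t : Fin (n + 1)} (h : m ≠ t) (a : R) :
    f (Fin.cons y (t.removeNth (Function.update w m (a • w m)))) =
      a • f (Fin.cons y (t.removeNth w)) := by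
  obtain ⟨l, rfl⟩ := Fin.exists_succAbove_eq h
  rw [Fin.removeNth_update_succAbove, Fin.cons_update]
  exact f.map_update_smul_self (Fin.cons y (t.removeNth w)) l.succ a

end AlternatingMap

theorem LieRinehart.smul_lie (L : LieRinehart k A g) (a : A) (x y : g) :
    ⁅a • x, y⁆ = a • ⁅x, y⁆ - L.anchor y a • x := by
  rw [← lie_skew, L.bracket_smul, neg_add, ← smul_neg, lie_skew, sub_eq_add_neg]

section remove2

variable {p : ℕ} {V : Type*} [AddCommGroup V] [Module A V]
  (ψ : AlternatingMap A g V (Fin (p + 1))) (v : Fin (p + 2) → g)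
  {i j : Fin (p + 2)} (h : i < j)

theorem AlternatingMap.map_cons_left_remove2 :
    ψ (Fin.cons (v i) (remove2 v i j h)) = (-1 : ℤ) ^ (i : ℕ) • ψ (j.removeNth v) := by
  set t := i.castPred (Fin.ne_last_of_lt h)
  have hvt : j.removeNth v t = v i := congrArg v (Fin.succAbove_castPred_of_lt j i h)
  have hrem : t.removeNth (j.removeNth v) = remove2 v i j h := by
    rw [Fin.removeNth_removeNth_eq_swap, Fin.succAbove_castPred_of_lt j i h,
      Fin.predAbove_of_castSucc_lt _ _ (by simpa [t] using h)]
    rfl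
  rw [← hvt, ← hrem, ψ.map_cons_removeNth]
  rfl

theorem AlternatingMap.map_cons_right_remove2 :
    ψ (Fin.cons (v j) (remove2 v i j h)) = (-1 : ℤ) ^ ((j : ℕ) - 1) • ψ (i.removeNth v) := by
  have hj : j ≠ 0 := Fin.ne_zero_of_lt h
  have hvt : i.removeNth v (j.pred hj) = v j := congrArg v (Fin.succAbove_pred_of_lt i j h)
  have := ψ.map_cons_removeNth (i.removeNth v) (j.pred hj)
  rwa [hvt, Fin.val_pred] at this

end remove2

section terms

variable {p : ℕ}

def lrDConnTerm (D : LRConnection L W) (ψ : (Fin (p + 1) → g) → W) (v : Fin (p + 2) → g)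
    (j : Fin (p + 2)) : W :=
  ((-1 : ℤ) ^ (j : ℕ)) • D.conn (v j) (ψ (j.removeNth v))

def lrDBracketTerm (ψ : (Fin (p + 1) → g) → W) (v : Fin (p + 2) → g) {i j : Fin (p + 2)}
    (h : i < j) : W :=
  ((-1 : ℤ) ^ ((i : ℕ) + (j : ℕ))) • ψ (Fin.cons ⁅v i, v j⁆ (remove2 v i j h))

theorem lrD_eq_sum_lrDConnTerm_add_sum_lrDBracketTerm (D : LRConnection L W)
    (ψ : (Fin (p + 1) → g) → W) (v : Fin (p + 2) → g) :
    lrD D ψ v = ∑ j, lrDConnTerm D ψ v j +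
      ∑ i, ∑ j, if h : i < j then lrDBracketTerm ψ v h else 0 := rfl

def anchorDefect (L : LieRinehart k A g) (ψ : (Fin (p + 1) → g) → W) (v : Fin (p + 2) → g)
    (a : A) (j : Fin (p + 2)) : W :=
  ((-1 : ℤ) ^ (j : ℕ)) • L.anchor (v j) a • ψ (j.removeNth v)

end terms

section bracketTerms

variable {p : ℕ} {V : Type*} [AddCommGroup V] [Module A V]
  (ψ : AlternatingMap A g V (Fin (p + 1))) (v : Fin (p + 2) → g) (a : A)

section pair

variable {i j : Fin (p + 2)} (h : i < j)

theorem lrDBracketTerm_update_smul_left :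
    lrDBracketTerm ψ (Function.update v i (a • v i)) h =
      a • lrDBracketTerm ψ v h - anchorDefect L ψ v a j := by
  have hrem : remove2 (Function.update v i (a • v i)) i j h = remove2 v i j h :=
    congrArg (Fin.removeNth (j.pred (Fin.ne_zero_of_lt h))) (Fin.removeNth_update i _ v)
  have hsign : (-1 : ℤ) ^ ((i : ℕ) + (j : ℕ)) * (-1) ^ (i : ℕ) = (-1) ^ (j : ℕ) := by
    rw [add_comm (i : ℕ), neg_one_pow_add_mul_neg_one_pow]
  rw [lrDBracketTerm, lrDBracketTerm, Function.update_self, Function.update_of_ne h.ne', hrem,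
    L.smul_lie, sub_eq_add_neg, ← neg_smul, ψ.map_cons_smul_add_smul, ψ.map_cons_left_remove2]
  rw [anchorDefect, smul_add, smul_comm _ a, neg_smul, smul_neg, ← sub_eq_add_neg,
    smul_comm (L.anchor _ a), smul_smul, hsign]

theorem lrDBracketTerm_update_smul_right :
    lrDBracketTerm ψ (Function.update v j (a • v j)) h =
      a • lrDBracketTerm ψ v h - anchorDefect L ψ v a i := by
  have hrem : remove2 (Function.update v j (a • v j)) i j h = remove2 v i j h := by
    funext m
    refine Function.update_of_ne (fun hm => ?_) _ _
    refine Fin.succAbove_ne (j.pred (Fin.ne_zero_of_lt h)) m ?_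
    exact Fin.succAbove_right_injective (hm.trans (Fin.succAbove_pred_of_lt i j h).symm)
  have hsign : (-1 : ℤ) ^ ((i : ℕ) + (j : ℕ)) * (-1) ^ ((j : ℕ) - 1) = -(-1) ^ (i : ℕ) := by
    have hj : (i : ℕ) < j := h
    rw [show (i : ℕ) + j = i + 1 + (j - 1) by omega, neg_one_pow_add_mul_neg_one_pow, pow_succ,
      mul_neg_one]
  rw [lrDBracketTerm, lrDBracketTerm, Function.update_of_ne h.ne, Function.update_self, hrem,
    L.bracket_smul, ψ.map_cons_smul_add_smul, ψ.map_cons_right_remove2]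
  rw [anchorDefect, smul_add, smul_comm _ a, smul_comm _ (L.anchor _ a), smul_smul, hsign,
    neg_smul, smul_neg, ← sub_eq_add_neg, smul_comm (L.anchor _ a)]

theorem lrDBracketTerm_update_smul_of_ne {i₀ : Fin (p + 2)} (hi : i ≠ i₀) (hj : j ≠ i₀) :
    lrDBracketTerm ψ (Function.update v i₀ (a • v i₀)) h = a • lrDBracketTerm ψ v h := by
  rw [lrDBracketTerm, lrDBracketTerm, Function.update_of_ne hi, Function.update_of_ne hj,
    smul_comm a]
  congr 1
  obtain ⟨m, rfl⟩ := Fin.exists_succAbove_eq (Ne.symm hi)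
  have hm : m ≠ j.pred (Fin.ne_zero_of_lt h) := by
    rintro rfl
    exact hj (Fin.succAbove_pred_of_lt i j h).symm
  have hrem : remove2 (Function.update v (i.succAbove m) (a • v (i.succAbove m))) i j h =
      (j.pred (Fin.ne_zero_of_lt h)).removeNth
        (Function.update (i.removeNth v) m (a • i.removeNth v m)) :=
    congrArg (Fin.removeNth _) (Fin.removeNth_update_succAbove i m _ v)
  rw [hrem, ψ.map_cons_removeNth_update_smul_self_of_ne _ _ hm]
  rfl

theorem lrDBracketTerm_update_smul_self (i₀ : Fin (p + 2)) :
    lrDBracketTerm ψ (Function.update v i₀ (a • v i₀)) h =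
      a • lrDBracketTerm ψ v h -
        if i = i₀ then anchorDefect L ψ v a j
        else if j = i₀ then anchorDefect L ψ v a i else 0 := by
  by_cases hi : i = i₀
  · subst hi
    rw [if_pos rfl]
    exact lrDBracketTerm_update_smul_left ψ v a h
  by_cases hj : j = i₀
  · subst hj
    rw [if_neg hi, if_pos rfl]
    exact lrDBracketTerm_update_smul_right ψ v a h
  · rw [if_neg hi, if_neg hj, sub_zero]
    exact lrDBracketTerm_update_smul_of_ne ψ v a h hi hj

end pair

variable (i₀ : Fin (p + 2))

theorem sum_lrDBracketTerm_update_smul_self :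
    (∑ i, ∑ j, if h : i < j then lrDBracketTerm ψ (Function.update v i₀ (a • v i₀)) h else 0) =
      a • (∑ i, ∑ j, if h : i < j then lrDBracketTerm ψ v h else 0) -
        ∑ j, if j = i₀ then 0 else anchorDefect L ψ v a j := by
  rw [← Finset.sum_sum_lt_pairs_through, Finset.smul_sum, ← Finset.sum_sub_distrib]
  refine Finset.sum_congr rfl fun i _ => ?_
  rw [Finset.smul_sum, ← Finset.sum_sub_distrib]
  refine Finset.sum_congr rfl fun j _ => ?_
  by_cases h : i < j
  · rw [dif_pos h, dif_pos h, if_pos h, lrDBracketTerm_update_smul_self (L := L)]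
  · rw [dif_neg h, dif_neg h, if_neg h, smul_zero, sub_zero]

end bracketTerms

section connTerms

variable {p : ℕ} (D : LRConnection L W) (ψ : AlternatingMap A g W (Fin (p + 1)))
  (v : Fin (p + 2) → g) (i₀ : Fin (p + 2)) (a : A)

theorem lrDConnTerm_update_smul_self (j : Fin (p + 2)) :
    lrDConnTerm D ψ (Function.update v i₀ (a • v i₀)) j =
      a • lrDConnTerm D ψ v j + if j = i₀ then 0 else anchorDefect L ψ v a j := by
  rw [lrDConnTerm, lrDConnTerm]
  by_cases hj : j = i₀
  · subst hj
    rw [Fin.removeNth_update, Function.update_self, D.conn_smul, if_pos rfl, add_zero, smul_comm]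
  · rw [Function.update_of_ne hj, ψ.map_removeNth_update_smul_self_of_ne v (Ne.symm hj),
      D.leibniz, if_neg hj, anchorDefect, smul_add, smul_comm _ a]

theorem sum_lrDConnTerm_update_smul_self :
    ∑ j, lrDConnTerm D ψ (Function.update v i₀ (a • v i₀)) j =
      a • ∑ j, lrDConnTerm D ψ v j + ∑ j, if j = i₀ then 0 else anchorDefect L ψ v a j := by
  rw [Finset.smul_sum, ← Finset.sum_add_distrib]
  exact Finset.sum_congr rfl fun j _ => lrDConnTerm_update_smul_self D ψ v i₀ a j

theorem lrD_update_smul_self :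
    lrD D ψ (Function.update v i₀ (a • v i₀)) = a • lrD D ψ v := by
  rw [lrD_eq_sum_lrDConnTerm_add_sum_lrDBracketTerm, lrD_eq_sum_lrDConnTerm_add_sum_lrDBracketTerm,
    sum_lrDConnTerm_update_smul_self, sum_lrDBracketTerm_update_smul_self (L := L), smul_add]
  abel

end connTerms

/-- the differential sends `A`-multilinear alternating maps to `A`-linear ones. -/
theorem lrD_A_multilinear (D : LRConnection L W) {p : ℕ}
    (ψ : AlternatingMap A g W (Fin (p + 1)))
    (v : Fin (p + 2) → g) (i : Fin (p + 2)) (a : A) (x : g) :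
    lrD D ⇑ψ (Function.update v i (a • x)) = a • lrD D ⇑ψ (Function.update v i x) := by
  have hx : Function.update v i (a • x) =
      Function.update (Function.update v i x) i (a • Function.update v i x i) := by
    rw [Function.update_self, Function.update_idem]
  rw [hx, lrD_update_smul_self]
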